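/- arXiv:2402.00482 — 2 statements merged into one kernel-verified Lean document; each statement's English description precedes it below -/
import Mathlib

section
/- Let n₁, n₂ ∈ ℕ, 0 < β_{1,1} < ⋯ < β_{n₁,1} ≤ 1, 0 < β_{1,2} < ⋯ < β_{n₂,2} ≤ 1, κ_{l,j} > 0, c > 0, η ∈ ℝ, and let (μ_k) be a sequence of positive reals with μ_k → ∞ and μ_k + η > 0. If ∑_{l=1}^{n₁} κ_{l,1}(μ_k + η)^{β_{l,1}} = c ∑_{l=1}^{n₂} κ_{l,2} μ_k^{β_{l,2}} for all k, then n₁ = n₂, β_{l,1} = β_{l,2} and κ_{l,1} = c κ_{l,2} for all l = 1,…,n₁. -/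
/-!
For `0 < β ≤ 1` the map `x ↦ x ^ β` is subadditive, so shifting `μ_k` by `η` changes each
power by at most `|η| ^ β`. Hence the difference of the two sides of the identity, evaluated
without the shift, is a real combination `∑ A t μ_k ^ t` of positive powers that stays bounded
as `μ_k → ∞`. Dividing by `μ_k ^ t₀` for the largest exponent `t₀` with `A t₀ ≠ 0` shows that
no such coefficient exists, and comparing the coefficients of the two strictly increasing
families of exponents identifies them term by term.
-/

open Filter Finset Topology

namespace Real

lemma abs_rpow_add_sub_rpow_le {x η β : ℝ} (hx : 0 ≤ x) (hxη : 0 ≤ x + η) (hβ₀ : 0 ≤ β)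
    (hβ₁ : β ≤ 1) : |(x + η) ^ β - x ^ β| ≤ |η| ^ β := by
  rcases le_total 0 η with hη | hη
  · have hmono : x ^ β ≤ (x + η) ^ β := rpow_le_rpow hx (by linarith) hβ₀
    have hsub := rpow_add_le_add_rpow hx hη hβ₀ hβ₁
    rw [abs_of_nonneg (sub_nonneg.2 hmono), abs_of_nonneg hη]
    linarith
  · have hmono : (x + η) ^ β ≤ x ^ β := rpow_le_rpow hxη (by linarith) hβ₀
    have hsub := rpow_add_le_add_rpow hxη (neg_nonneg.2 hη) hβ₀ hβ₁
    rw [add_neg_cancel_right] at hsub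
    rw [abs_of_nonpos (sub_nonpos.2 hmono), abs_of_nonpos hη]
    linarith

variable {ι : Type*} {l : Filter ι} [l.NeBot] {x : ι → ℝ}

theorem eq_zero_of_abs_sum_mul_rpow_le (hx : Tendsto x l atTop) {S : Finset ℝ}
    (hS : ∀ t ∈ S, 0 < t) {A : ℝ → ℝ} {C : ℝ}
    (hbd : ∀ᶠ i in l, |∑ t ∈ S, A t * x i ^ t| ≤ C) : ∀ t ∈ S, A t = 0 := by
  by_contra! h
  obtain ⟨t₁, ht₁S, ht₁⟩ := h
  set T := S.filter (A · ≠ 0)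
  have hT : T.Nonempty := ⟨t₁, mem_filter.2 ⟨ht₁S, ht₁⟩⟩
  set t₀ := T.max' hT
  obtain ⟨ht₀S, ht₀⟩ := mem_filter.1 (T.max'_mem hT)
  have hpos : ∀ᶠ i in l, 0 < x i := hx.eventually_gt_atTop 0
  have hterm : ∀ t ∈ S,
      Tendsto (fun i => A t * x i ^ (t - t₀)) l (𝓝 (if t = t₀ then A t else 0)) := by
    intro t ht
    rcases lt_trichotomy t t₀ with hlt | heq | hgt
    · rw [if_neg hlt.ne]
      simpa [Function.comp_def] using
        ((tendsto_rpow_neg_atTop (sub_pos.2 hlt)).comp hx).const_mul (A t)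
    · simp [heq]
    · have hA : A t = 0 := by
        by_contra hA
        exact (T.le_max' t (mem_filter.2 ⟨ht, hA⟩)).not_gt hgt
      simp [hA]
  have hlim : Tendsto (fun i => x i ^ (-t₀) * ∑ t ∈ S, A t * x i ^ t) l (𝓝 (A t₀)) := by
    have := tendsto_finsetSum S hterm
    rw [sum_ite_eq', if_pos ht₀S] at this
    refine this.congr' ?_
    filter_upwards [hpos] with i hi
    rw [mul_sum]
    refine sum_congr rfl fun t _ => ?_
    rw [mul_left_comm, ← rpow_add hi, neg_add_eq_sub]
  have hzero : Tendsto (fun i => x i ^ (-t₀) * ∑ t ∈ S, A t * x i ^ t) l (𝓝 0) := by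
    refine squeeze_zero_norm' ?_
      (by simpa using ((tendsto_rpow_neg_atTop (hS t₀ ht₀S)).comp hx).mul_const C)
    filter_upwards [hpos, hbd] with i hi hiC
    rw [norm_mul, norm_of_nonneg (rpow_nonneg hi.le _)]
    exact mul_le_mul_of_nonneg_left hiC (rpow_nonneg hi.le _)
  exact ht₀ (tendsto_nhds_unique hlim hzero)

theorem sum_filter_eq_zero_of_abs_sum_mul_rpow_le {κ : Type*} [Fintype κ]
    (hx : Tendsto x l atTop) {e : κ → ℝ} (he : ∀ j, 0 < e j) {a : κ → ℝ} {C : ℝ}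
    (hbd : ∀ᶠ i in l, |∑ j, a j * x i ^ e j| ≤ C) (t : ℝ) :
    ∑ j with e j = t, a j = 0 := by
  classical
  by_cases ht : t ∈ univ.image e
  · have hrepr : ∀ y : ℝ,
        ∑ s ∈ univ.image e, (∑ j with e j = s, a j) * y ^ s = ∑ j, a j * y ^ e j := by
      intro y
      rw [← sum_fiberwise_of_maps_to (g := e) (fun j _ => mem_image_of_mem e (mem_univ j))]
      refine sum_congr rfl fun s _ => ?_
      rw [sum_mul]
      exact sum_congr rfl fun j hj => by rw [(mem_filter.1 hj).2]
    refine eq_zero_of_abs_sum_mul_rpow_le hx (A := fun s => ∑ j with e j = s, a j) (C := C)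
      ?_ ?_ t ht
    · simp only [mem_image, mem_univ, true_and, forall_exists_index, forall_apply_eq_imp_iff]
      exact he
    · simpa only [hrepr] using hbd
  · refine sum_eq_zero fun j hj => absurd ?_ ht
    exact (mem_filter.1 hj).2 ▸ mem_image_of_mem e (mem_univ j)

end Real

theorem Fin.exists_cast_eq_of_strictMono_of_range_eq {α : Type*} [Preorder α] {m n : ℕ}
    {f : Fin m → α} {g : Fin n → α} (hf : StrictMono f) (hg : StrictMono g)
    (h : Set.range f = Set.range g) : ∃ h : m = n, ∀ i, f i = g (Fin.cast h i) := by
  obtain rfl : m = n := by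
    simpa [Set.ncard_range_of_injective hf.injective,
      Set.ncard_range_of_injective hg.injective] using congr_arg Set.ncard h
  exact ⟨rfl, congr_fun ((hf.range_inj hg).1 h)⟩

theorem Fin.exists_cast_eq_of_sum_ite_eq {α M : Type*} [LinearOrder α] [AddCommMonoid M]
    {m n : ℕ} {β₁ : Fin m → α} {β₂ : Fin n → α} (hβ₁ : StrictMono β₁) (hβ₂ : StrictMono β₂)
    {κ₁ : Fin m → M} {κ₂ : Fin n → M} (hκ₁ : ∀ i, κ₁ i ≠ 0) (hκ₂ : ∀ i, κ₂ i ≠ 0)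
    (h : ∀ t, ∑ i, (if β₁ i = t then κ₁ i else 0) = ∑ i, (if β₂ i = t then κ₂ i else 0)) :
    ∃ h : m = n, ∀ i, β₁ i = β₂ (Fin.cast h i) ∧ κ₁ i = κ₂ (Fin.cast h i) := by
  have sum_at {k : ℕ} {β : Fin k → α} (hβ : StrictMono β) (κ : Fin k → M) (i : Fin k) :
      ∑ j, (if β j = β i then κ j else 0) = κ i := by
    simp [hβ.injective.eq_iff]
  have sum_off {k : ℕ} {β : Fin k → α} (κ : Fin k → M) {t : α} (ht : t ∉ Set.range β) :
      ∑ j, (if β j = t then κ j else 0) = 0 :=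
    sum_eq_zero fun j _ => if_neg fun hj => ht ⟨j, hj⟩
  have hrange : Set.range β₁ = Set.range β₂ := by
    refine subset_antisymm ?_ ?_ <;> rintro _ ⟨i, rfl⟩ <;> by_contra hi
    · exact hκ₁ i (by rw [← sum_at hβ₁ κ₁ i, h, sum_off κ₂ hi])
    · exact hκ₂ i (by rw [← sum_at hβ₂ κ₂ i, ← h, sum_off κ₁ hi])
  obtain ⟨rfl, hβ⟩ := Fin.exists_cast_eq_of_strictMono_of_range_eq hβ₁ hβ₂ hrange
  refine ⟨rfl, fun i => ⟨hβ i, ?_⟩⟩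
  rw [← sum_at hβ₁ κ₁ i, h, hβ i, sum_at hβ₂ κ₂]

theorem stmt11_general (n₁ n₂ : ℕ) (β1 : Fin n₁ → ℝ) (β2 : Fin n₂ → ℝ)
    (κ1 : Fin n₁ → ℝ) (κ2 : Fin n₂ → ℝ)
    (hβ1mono : StrictMono β1) (hβ2mono : StrictMono β2)
    (hβ1 : ∀ l, β1 l ∈ Set.Ioc (0:ℝ) 1) (hβ2 : ∀ l, β2 l ∈ Set.Ioc (0:ℝ) 1)
    (hκ1 : ∀ l, 0 < κ1 l) (hκ2 : ∀ l, 0 < κ2 l)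
    (c : ℝ) (hc : 0 < c) (η : ℝ)
    (μ : ℕ → ℝ)
    (hμtop : Filter.Tendsto μ Filter.atTop Filter.atTop)
    (heq : ∀ k, ∑ l, κ1 l * (μ k + η) ^ (β1 l) = c * ∑ l, κ2 l * (μ k) ^ (β2 l)) :
    ∃ h : n₁ = n₂, ∀ l : Fin n₁,
      β1 l = β2 (Fin.cast h l) ∧ κ1 l = c * κ2 (Fin.cast h l) := by
  set e : Fin n₁ ⊕ Fin n₂ → ℝ := Sum.elim β1 β2
  set a : Fin n₁ ⊕ Fin n₂ → ℝ := Sum.elim κ1 fun i => -(c * κ2 i)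
  have hbd : ∀ᶠ k in atTop, |∑ j, a j * μ k ^ e j| ≤ ∑ i, κ1 i * |η| ^ β1 i := by
    filter_upwards [hμtop.eventually_ge_atTop 0, hμtop.eventually_ge_atTop (-η)] with k hk hkη
    have hdiff : ∑ j, a j * μ k ^ e j = ∑ i, κ1 i * (μ k ^ β1 i - (μ k + η) ^ β1 i) := by
      simp only [e, a, Fintype.sum_sum_type, Sum.elim_inl, Sum.elim_inr, mul_sub,
        sum_sub_distrib, heq k, neg_mul, sum_neg_distrib, mul_sum, mul_assoc]
      ring
    rw [hdiff]
    refine (abs_sum_le_sum_abs _ _).trans (sum_le_sum fun i _ => ?_)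
    rw [abs_mul, abs_of_pos (hκ1 i), abs_sub_comm]
    exact mul_le_mul_of_nonneg_left
      (Real.abs_rpow_add_sub_rpow_le hk (by linarith) (hβ1 i).1.le (hβ1 i).2) (hκ1 i).le
  have hfiber := Real.sum_filter_eq_zero_of_abs_sum_mul_rpow_le hμtop
    (Sum.forall.2 ⟨fun i => (hβ1 i).1, fun i => (hβ2 i).1⟩) hbd
  refine Fin.exists_cast_eq_of_sum_ite_eq hβ1mono hβ2mono (fun i => (hκ1 i).ne')
    (fun i => (mul_pos hc (hκ2 i)).ne') fun t => ?_
  have hcoeff : (∑ i, if β1 i = t then κ1 i else 0)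
      - ∑ i, (if β2 i = t then c * κ2 i else 0) = 0 := by
    convert hfiber t using 1
    simp [sum_filter, Fintype.sum_sum_type, e, a, sub_eq_add_neg, ← sum_neg_distrib, neg_ite]
    -- the two sides differ only in their `Decidable` instances, which mention `e`
    rfl
  exact sub_eq_zero.1 hcoeff

/-- Asymptotic identification of Dirichlet-series-like sums of powers: if
`∑_{l} κ_{l,1}(μ_k+η)^{β_{l,1}} = c ∑_{l} κ_{l,2} μ_k^{β_{l,2}}` along a sequence
`μ_k → ∞`, then the two families of exponents and (rescaled) coefficients coincide. -/
theorem stmt11 (n₁ n₂ : ℕ) (β1 : Fin n₁ → ℝ) (β2 : Fin n₂ → ℝ)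
    (κ1 : Fin n₁ → ℝ) (κ2 : Fin n₂ → ℝ)
    (hβ1mono : StrictMono β1) (hβ2mono : StrictMono β2)
    (hβ1 : ∀ l, β1 l ∈ Set.Ioc (0:ℝ) 1) (hβ2 : ∀ l, β2 l ∈ Set.Ioc (0:ℝ) 1)
    (hκ1 : ∀ l, 0 < κ1 l) (hκ2 : ∀ l, 0 < κ2 l)
    (c : ℝ) (hc : 0 < c) (η : ℝ)
    (μ : ℕ → ℝ) (hμpos : ∀ k, 0 < μ k) (hμη : ∀ k, 0 < μ k + η)
    (hμtop : Filter.Tendsto μ Filter.atTop Filter.atTop)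
    (heq : ∀ k, ∑ l, κ1 l * (μ k + η) ^ (β1 l) = c * ∑ l, κ2 l * (μ k) ^ (β2 l)) :
    ∃ h : n₁ = n₂, ∀ l : Fin n₁,
      β1 l = β2 (Fin.cast h l) ∧ κ1 l = c * κ2 (Fin.cast h l) :=
  stmt11_general n₁ n₂ β1 β2 κ1 κ2 hβ1mono hβ2mono hβ1 hβ2 hκ1 hκ2 c hc η μ hμtop heq
end

section
/- Let g : (0,1) → ℝ be integrable, let (μ_k) be positive reals with μ_k → ∞, and suppose there exists β* ∈ (0,1) such that g is nonzero and of constant sign on (β*, 1), with |g(β)| > ε for |β − β**| < ε for some β** ∈ (β*,1) and ε ∈ (0, β** − β*). Then |∫₀¹ g(β) μ_k^β dβ| → ∞ as k → ∞; in particular the sequence ∫₀¹ g(β) μ_k^β dβ is unbounded. -/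
/-!
Split `∫₀¹ g(β) μ^β dβ` at `β*`. For `μ ≥ 1` the part over `(0, β*]` is at most
`C* μ^{β*}` in absolute value, with `C* = ∫₀^{β*} |g|`, while on `(β*, 1)` the integrand has
the sign of `g`, so that part dominates the integral over `(β** − ε, β**)`, which is at least
`ε² μ^{β** − ε}`. Since `β** − ε > β*`, the difference of the two bounds tends to infinity.
-/

open MeasureTheory Set Filter Topology

lemma tendsto_mul_rpow_sub_mul_rpow_atTop {A C a b : ℝ} (hA : 0 < A) (ha : 0 < a) (hba : b < a) :
    Tendsto (fun x : ℝ => A * x ^ a - C * x ^ b) atTop atTop := by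
  have hsmall : Tendsto (fun x : ℝ => A - C * x ^ (b - a)) atTop (𝓝 A) := by
    have := tendsto_rpow_neg_atTop (sub_pos.2 hba)
    simpa using (this.const_mul C).const_sub A
  refine ((tendsto_rpow_atTop ha).atTop_mul_pos hA hsmall).congr' ?_
  filter_upwards [eventually_gt_atTop 0] with x hx
  rw [mul_sub, ← mul_assoc, mul_comm (x ^ a) C, mul_assoc, ← Real.rpow_add hx]
  ring_nf

section

variable {g : ℝ → ℝ} {s : Set ℝ} {x : ℝ}

lemma integrableOn_mul_rpow (hx : 1 ≤ x) {b : ℝ} (hs : MeasurableSet s) (hsb : s ⊆ Iic b)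
    (hg : IntegrableOn g s) : IntegrableOn (fun β => g β * x ^ β) s := by
  refine hg.mul_bdd (c := x ^ b) ?_ (ae_restrict_of_forall_mem hs fun β hβ => ?_)
  · exact (Real.continuous_const_rpow (by positivity)).aestronglyMeasurable
  · rw [Real.norm_eq_abs, abs_of_pos (by positivity)]
    exact Real.rpow_le_rpow_of_exponent_le hx (hsb hβ)

lemma abs_setIntegral_mul_rpow_le (hx : 1 ≤ x) {b : ℝ} (hs : MeasurableSet s) (hsb : s ⊆ Iic b)
    (hg : IntegrableOn g s) : |∫ β in s, g β * x ^ β| ≤ (∫ β in s, |g β|) * x ^ b := by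
  rw [← Real.norm_eq_abs, ← integral_mul_const]
  refine norm_integral_le_of_norm_le (hg.abs.mul_const _) (ae_restrict_of_forall_mem hs ?_)
  intro β hβ
  rw [Real.norm_eq_abs, abs_mul, abs_of_pos (Real.rpow_pos_of_pos (by linarith) β)]
  exact mul_le_mul_of_nonneg_left (Real.rpow_le_rpow_of_exponent_le hx (hsb hβ)) (abs_nonneg _)

lemma mul_rpow_le_setIntegral_mul_rpow (hx : 1 ≤ x) (hs : MeasurableSet s)
    (hf : IntegrableOn (fun β => g β * x ^ β) s) (hg : ∀ β ∈ s, 0 ≤ g β) {a a' c : ℝ}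
    (haa' : a ≤ a') (hsub : Ioo a a' ⊆ s) (hc : ∀ β ∈ Ioo a a', c ≤ g β) :
    c * (a' - a) * x ^ a ≤ ∫ β in s, g β * x ^ β := by
  have hx0 : 0 < x := by positivity
  calc c * (a' - a) * x ^ a = c * x ^ a * volume.real (Ioo a a') := by
        rw [Real.volume_real_Ioo_of_le haa']; ring
    _ ≤ ∫ β in Ioo a a', g β * x ^ β := by
        refine setIntegral_ge_of_const_le_real measurableSet_Ioo measure_Ioo_lt_top.ne
          (fun β hβ => ?_) (hf.mono_set hsub)
        exact mul_le_mul (hc β hβ) (Real.rpow_le_rpow_of_exponent_le hx hβ.1.le)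
          (Real.rpow_nonneg hx0.le _) (hg β (hsub hβ))
    _ ≤ ∫ β in s, g β * x ^ β := by
        refine setIntegral_mono_set hf (ae_restrict_of_forall_mem hs fun β hβ => ?_)
          hsub.eventuallyLE
        exact mul_nonneg (hg β hβ) (Real.rpow_nonneg hx0.le _)

lemma sub_le_setIntegral_mul_rpow (hx : 1 ≤ x) (hs : MeasurableSet s) (hg : IntegrableOn g s)
    (hf : IntegrableOn (fun β => g β * x ^ β) s) {b : ℝ} (hpos : ∀ β ∈ s ∩ Ioi b, 0 ≤ g β)
    {a a' c : ℝ} (haa' : a ≤ a') (hsub : Ioo a a' ⊆ s ∩ Ioi b) (hc : ∀ β ∈ Ioo a a', c ≤ g β) :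
    c * (a' - a) * x ^ a - (∫ β in s \ Ioi b, |g β|) * x ^ b ≤ ∫ β in s, g β * x ^ β := by
  rw [← integral_inter_add_sdiff measurableSet_Ioi hf]
  have habove := mul_rpow_le_setIntegral_mul_rpow hx (hs.inter measurableSet_Ioi)
    (hf.mono_set inter_subset_left) hpos haa' hsub hc
  have hbelow := abs_setIntegral_mul_rpow_le hx (hs.diff measurableSet_Ioi) (b := b)
    (fun β hβ => show β ≤ b from not_lt.1 hβ.2) (hg.mono_set sdiff_subset)
  linarith [neg_abs_le (∫ β in s \ Ioi b, g β * x ^ β)]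

theorem tendsto_setIntegral_mul_rpow_atTop (hg : IntegrableOn g (Ioo 0 1)) {b b' ε : ℝ}
    (hb : 0 < b) (hpos : ∀ β ∈ Ioo b 1, 0 < g β) (hb' : b' < 1) (hε : 0 < ε)
    (hεb : ε < b' - b) (hlb : ∀ β, |β - b'| < ε → ε < |g β|) :
    Tendsto (fun x => ∫ β in Ioo 0 1, g β * x ^ β) atTop atTop := by
  have hsub : Ioo (b' - ε) b' ⊆ Ioo 0 1 ∩ Ioi b := fun β ⟨h₁, h₂⟩ =>
    ⟨⟨by linarith, h₂.trans hb'⟩, show b < β by linarith⟩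
  have hc : ∀ β ∈ Ioo (b' - ε) b', ε ≤ g β := fun β hβ => by
    have hεg := hlb β (abs_sub_lt_iff.2 ⟨by linarith [hβ.2], by linarith [hβ.1]⟩)
    rw [abs_of_pos (hpos β ⟨(hsub hβ).2, (hsub hβ).1.2⟩)] at hεg
    exact hεg.le
  have hlow : ∀ x, 1 ≤ x → ε ^ 2 * x ^ (b' - ε) - (∫ β in Ioo 0 1 \ Ioi b, |g β|) * x ^ b ≤
      ∫ β in Ioo 0 1, g β * x ^ β := fun x hx => by
    have := sub_le_setIntegral_mul_rpow hx measurableSet_Ioo hg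
      (integrableOn_mul_rpow hx measurableSet_Ioo (fun β hβ => hβ.2.le) hg)
      (fun β hβ => (hpos β ⟨hβ.2, hβ.1.2⟩).le) (by linarith) hsub hc
    rwa [sub_sub_cancel, ← sq] at this
  exact tendsto_atTop_mono' _ ((eventually_ge_atTop 1).mono hlow)
    (tendsto_mul_rpow_sub_mul_rpow_atTop (by positivity) (by linarith) (by linarith))

end

theorem stmt14_general (g : ℝ → ℝ) (hg : IntegrableOn g (Set.Ioo 0 1))
    (μ : ℕ → ℝ)
    (hμtop : Filter.Tendsto μ Filter.atTop Filter.atTop)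
    (βs : ℝ) (hβs : βs ∈ Set.Ioo (0:ℝ) 1)
    (hsign : (∀ β ∈ Set.Ioo βs 1, 0 < g β) ∨ (∀ β ∈ Set.Ioo βs 1, g β < 0))
    (βss ε : ℝ) (hβss : βss ∈ Set.Ioo βs 1) (hε : ε ∈ Set.Ioo 0 (βss - βs))
    (hlb : ∀ β, |β - βss| < ε → ε < |g β|) :
    Filter.Tendsto (fun k => |∫ β in Set.Ioo (0:ℝ) 1, g β * (μ k) ^ β|)
      Filter.atTop Filter.atTop := by
  rcases hsign with hpos | hneg
  · exact tendsto_abs_atTop_atTop.comp <|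
      (tendsto_setIntegral_mul_rpow_atTop hg hβs.1 hpos hβss.2 hε.1 hε.2 hlb).comp hμtop
  · have hnegg := tendsto_setIntegral_mul_rpow_atTop hg.neg hβs.1
      (fun β hβ => neg_pos.2 (hneg β hβ)) hβss.2 hε.1 hε.2
      (fun β hβ => by simpa only [Pi.neg_apply, abs_neg] using hlb β hβ)
    simp only [Pi.neg_apply, neg_mul, integral_neg, tendsto_neg_atTop_iff] at hnegg
    exact tendsto_abs_atBot_atTop.comp (hnegg.comp hμtop)

/-- If `g` is integrable on `(0,1)`, nonzero of constant sign on some `(β*,1)` and bounded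
away from zero near some `β** ∈ (β*,1)`, then `|∫₀¹ g(β) μ_k^β dβ| → ∞` whenever `μ_k → ∞`. -/
theorem stmt14 (g : ℝ → ℝ) (hg : IntegrableOn g (Set.Ioo 0 1))
    (μ : ℕ → ℝ) (hμpos : ∀ k, 0 < μ k)
    (hμtop : Filter.Tendsto μ Filter.atTop Filter.atTop)
    (βs : ℝ) (hβs : βs ∈ Set.Ioo (0:ℝ) 1)
    (hsign : (∀ β ∈ Set.Ioo βs 1, 0 < g β) ∨ (∀ β ∈ Set.Ioo βs 1, g β < 0))
    (βss ε : ℝ) (hβss : βss ∈ Set.Ioo βs 1) (hε : ε ∈ Set.Ioo 0 (βss - βs))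
    (hlb : ∀ β, |β - βss| < ε → ε < |g β|) :
    Filter.Tendsto (fun k => |∫ β in Set.Ioo (0:ℝ) 1, g β * (μ k) ^ β|)
      Filter.atTop Filter.atTop :=
  stmt14_general g hg μ hμtop βs hβs hsign βss ε hβss hε hlb
end
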